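/- arXiv:2210.00734 — 2 statements merged into one kernel-verified Lean document; each statement's English description precedes it below -/
import Mathlib

section
/- Let −3 < γ < 0 and let μ(v) = (2π)^{3/2} e^{−|v|²/2}. For f ∈ L²(ℝ³) with ⟨·⟩^{γ/2} f ∈ L²(ℝ³), define for each v ∈ ℝ³ the integral A₂(v) = ∫_{|v−v'| ≥ 1} |v−v'|^γ μ^{1/2}(v') |f(v')| dv'. Then there is a constant C > 0 independent of f and v such that A₂(v) ≤ C ⟨v⟩^{γ+2} ‖⟨·⟩^{γ/2} f‖_{L²}. -/
/-! On `1 ≤ |v - v'|` we have `|v - v'|^γ ≤ |v - v'|^(γ+2)`, and Cauchy–Schwarz against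
`⟨v'⟩^(γ/2) |f v'|` leaves `∫_{|v-v'|≥1} |v - v'|^(2(γ+2)) μ(v') ⟨v'⟩^(-γ) dv'`.
Away from the diagonal `|v - v'|` is comparable to `⟨v - v'⟩`, and Peetre's inequality
`⟨v - v'⟩^(2s) ≤ 2^|s| ⟨v⟩^(2s) ⟨v'⟩^(2|s|)` moves all dependence on `v` into `⟨v⟩^(2(γ+2))`;
what remains is a polynomial moment of a Gaussian, which is finite. -/

open MeasureTheory Real

section Peetre

variable {E : Type*} [SeminormedAddCommGroup E]

lemma one_add_sq_norm_le_two_mul (x y : E) :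
    1 + ‖x‖ ^ 2 ≤ 2 * (1 + ‖y‖ ^ 2) * (1 + ‖x - y‖ ^ 2) := by
  have hxy : ‖x‖ ^ 2 ≤ (‖y‖ + ‖x - y‖) ^ 2 :=
    pow_le_pow_left₀ (norm_nonneg x) (norm_le_insert' x y) 2
  nlinarith [sq_nonneg (‖y‖ - ‖x - y‖), mul_nonneg (sq_nonneg ‖y‖) (sq_nonneg ‖x - y‖)]

lemma one_add_sq_norm_rpow_le (x y : E) (t : ℝ) :
    (1 + ‖x‖ ^ 2) ^ t ≤ 2 ^ |t| * (1 + ‖y‖ ^ 2) ^ t * (1 + ‖x - y‖ ^ 2) ^ |t| := by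
  rcases le_or_gt 0 t with ht | ht
  · rw [abs_of_nonneg ht, ← mul_rpow (by positivity) (by positivity),
      ← mul_rpow (by positivity) (by positivity)]
    exact rpow_le_rpow (by positivity) (one_add_sq_norm_le_two_mul x y) ht
  · obtain ⟨u, hu, rfl⟩ : ∃ u, 0 < u ∧ t = -u := ⟨-t, by linarith, by ring⟩
    have hyx := rpow_le_rpow (by positivity) (one_add_sq_norm_le_two_mul y x) hu.le
    rw [norm_sub_rev, mul_rpow (by positivity) (by positivity),
      mul_rpow (by positivity) (by positivity)] at hyx
    rw [abs_neg, abs_of_pos hu, rpow_neg (by positivity : (0 : ℝ) ≤ 1 + ‖x‖ ^ 2),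
      rpow_neg (by positivity : (0 : ℝ) ≤ 1 + ‖y‖ ^ 2), inv_le_iff_one_le_mul₀ (by positivity)]
    calc (1 : ℝ) = (1 + ‖y‖ ^ 2) ^ u * ((1 + ‖y‖ ^ 2) ^ u)⁻¹ := by field_simp
      _ ≤ 2 ^ u * (1 + ‖x‖ ^ 2) ^ u * (1 + ‖x - y‖ ^ 2) ^ u * ((1 + ‖y‖ ^ 2) ^ u)⁻¹ := by gcongr
      _ = _ := by ring

end Peetre

lemma sq_rpow_le_two_rpow_abs_mul {d : ℝ} (hd : 1 ≤ d) (s : ℝ) :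
    (d ^ s) ^ 2 ≤ 2 ^ |s| * (1 + d ^ 2) ^ s := by
  have hd0 : 0 ≤ d := zero_le_one.trans hd
  rw [← rpow_mul_natCast hd0, Nat.cast_ofNat, mul_comm, ← Nat.cast_ofNat (R := ℝ) (n := 2),
    rpow_natCast_mul hd0, Nat.cast_ofNat]
  rcases le_or_gt 0 s with hs | hs
  · calc (d ^ 2) ^ s ≤ 1 * (1 + d ^ 2) ^ s := by
          rw [one_mul]; exact rpow_le_rpow (by positivity) (by linarith) hs
      _ ≤ 2 ^ |s| * (1 + d ^ 2) ^ s := by gcongr; exact one_le_rpow (by norm_num) (abs_nonneg s)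
  · calc (d ^ 2) ^ s ≤ ((1 + d ^ 2) / 2) ^ s :=
          rpow_le_rpow_of_nonpos (by positivity) (by nlinarith) hs.le
      _ = 2 ^ |s| * (1 + d ^ 2) ^ s := by
          rw [div_rpow (by positivity) (by norm_num), abs_of_neg hs, rpow_neg (by norm_num)]
          ring

lemma one_add_rpow_le_mul_exp {b : ℝ} (hb : 0 < b) (q : ℝ) :
    ∃ C, ∀ u, 0 ≤ u → (1 + u) ^ q ≤ C * exp (b * u) := by
  set n := ⌈q⌉₊
  refine ⟨n.factorial / b ^ n * exp b, fun u hu => ?_⟩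
  have hexp := pow_div_factorial_le_exp _ (mul_nonneg hb.le (by linarith : 0 ≤ 1 + u)) n
  calc (1 + u) ^ q ≤ (1 + u) ^ (n : ℝ) := rpow_le_rpow_of_exponent_le (by linarith) (Nat.le_ceil q)
    _ = n.factorial / b ^ n * ((b * (1 + u)) ^ n / n.factorial) := by
        rw [rpow_natCast, mul_pow]; field_simp
    _ ≤ n.factorial / b ^ n * exp (b * (1 + u)) := by gcongr
    _ = n.factorial / b ^ n * exp b * exp (b * u) := by rw [mul_add, mul_one, exp_add]; ring

lemma integrable_one_add_sq_norm_rpow_mul_exp_neg {E : Type*} [NormedAddCommGroup E]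
    [InnerProductSpace ℝ E] [FiniteDimensional ℝ E] [MeasurableSpace E] [BorelSpace E]
    {b : ℝ} (hb : 0 < b) (q : ℝ) :
    Integrable (fun x : E => (1 + ‖x‖ ^ 2) ^ q * exp (-b * ‖x‖ ^ 2)) := by
  obtain ⟨C, hC⟩ := one_add_rpow_le_mul_exp (half_pos hb) q
  have hgauss : Integrable (fun x : E => exp (-(b / 2) * ‖x‖ ^ 2)) := by
    have := (GaussianFourier.integrable_cexp_neg_mul_sq_norm_add (V := E) (b := (b / 2 : ℝ))
      (by simpa using half_pos hb) 0 0).norm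
    simpa [Complex.norm_exp, ← Complex.ofReal_pow] using this
  refine (hgauss.const_mul C).mono' (by fun_prop) (Filter.Eventually.of_forall fun x => ?_)
  rw [norm_of_nonneg (by positivity)]
  calc (1 + ‖x‖ ^ 2) ^ q * exp (-b * ‖x‖ ^ 2)
      ≤ C * exp (b / 2 * ‖x‖ ^ 2) * exp (-b * ‖x‖ ^ 2) := by gcongr; exact hC _ (by positivity)
    _ = C * exp (-(b / 2) * ‖x‖ ^ 2) := by rw [mul_assoc, ← exp_add]; ring_nf

lemma integral_le_L2_mul_L2_of_le_mul {α : Type*} [MeasurableSpace α] {μ : Measure α}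
    {F G H : α → ℝ} (hF : 0 ≤ᵐ[μ] F) (hG : 0 ≤ᵐ[μ] G) (hH : 0 ≤ᵐ[μ] H) (hFGH : F ≤ᵐ[μ] G * H)
    (hGm : MemLp G 2 μ) (hHm : MemLp H 2 μ) :
    ∫ a, F a ∂μ ≤ (∫ a, G a ^ 2 ∂μ) ^ (1 / 2 : ℝ) * (∫ a, H a ^ 2 ∂μ) ^ (1 / 2 : ℝ) := by
  calc ∫ a, F a ∂μ ≤ ∫ a, G a * H a ∂μ := integral_mono_of_nonneg hF (hGm.integrable_mul hHm) hFGH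
    _ ≤ _ := by
      simpa using integral_mul_le_Lp_mul_Lq_of_nonneg HolderConjugate.two_two hG hH
        (by simpa using hGm) (by simpa using hHm)

section FarFieldKernel

variable {E : Type*}

noncomputable def farFieldKernel [Norm E] [Sub E] (s p c : ℝ) (v x : E) : ℝ :=
  ‖v - x‖ ^ s * √(c * exp (-‖x‖ ^ 2 / 2)) * (1 + ‖x‖ ^ 2) ^ p

lemma rpow_mul_sqrt_mul_abs_le_farFieldKernel_mul [Norm E] [Sub E] {v x : E}
    (hx : 1 ≤ ‖v - x‖) (γ c y : ℝ) :
    ‖v - x‖ ^ γ * √(c * exp (-‖x‖ ^ 2 / 2)) * |y| ≤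
      farFieldKernel (γ + 2) (-(γ / 4)) c v x * ((1 + ‖x‖ ^ 2) ^ (γ / 4) * |y|) := by
  have hw : (1 + ‖x‖ ^ 2) ^ (γ / 4) ≠ 0 := by positivity
  calc ‖v - x‖ ^ γ * √(c * exp (-‖x‖ ^ 2 / 2)) * |y|
      ≤ ‖v - x‖ ^ (γ + 2) * √(c * exp (-‖x‖ ^ 2 / 2)) * |y| := by
        have hpow : ‖v - x‖ ^ γ ≤ ‖v - x‖ ^ (γ + 2) := rpow_le_rpow_of_exponent_le hx (by linarith)
        gcongr
    _ = _ := by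
        rw [farFieldKernel, rpow_neg (by positivity)]
        field_simp

lemma farFieldKernel_sq_le [SeminormedAddCommGroup E] {c : ℝ} (hc : 0 ≤ c) (s p : ℝ) {v x : E}
    (hx : 1 ≤ ‖v - x‖) :
    farFieldKernel s p c v x ^ 2 ≤
      4 ^ |s| * c * (1 + ‖v‖ ^ 2) ^ s * ((1 + ‖x‖ ^ 2) ^ (|s| + 2 * p) * exp (-‖x‖ ^ 2 / 2)) := by
  have hpeetre := one_add_sq_norm_rpow_le (v - x) v s
  rw [sub_sub_cancel_left, norm_neg] at hpeetre
  have hdist : (‖v - x‖ ^ s) ^ 2 ≤ 4 ^ |s| * (1 + ‖v‖ ^ 2) ^ s * (1 + ‖x‖ ^ 2) ^ |s| := by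
    calc (‖v - x‖ ^ s) ^ 2 ≤ 2 ^ |s| * (1 + ‖v - x‖ ^ 2) ^ s := sq_rpow_le_two_rpow_abs_mul hx s
      _ ≤ 2 ^ |s| * (2 ^ |s| * (1 + ‖v‖ ^ 2) ^ s * (1 + ‖x‖ ^ 2) ^ |s|) := by gcongr
      _ = _ := by rw [show (4 : ℝ) = 2 * 2 by norm_num, mul_rpow (by norm_num) (by norm_num)]; ring
  have hw : 0 < 1 + ‖x‖ ^ 2 := by positivity
  calc farFieldKernel s p c v x ^ 2
      = (‖v - x‖ ^ s) ^ 2 * (c * exp (-‖x‖ ^ 2 / 2)) * (1 + ‖x‖ ^ 2) ^ (2 * p) := by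
        rw [farFieldKernel, mul_pow, mul_pow, sq_sqrt (by positivity), ← rpow_mul_natCast hw.le,
          Nat.cast_ofNat, mul_comm p]
    _ ≤ 4 ^ |s| * (1 + ‖v‖ ^ 2) ^ s * (1 + ‖x‖ ^ 2) ^ |s| * (c * exp (-‖x‖ ^ 2 / 2)) *
          (1 + ‖x‖ ^ 2) ^ (2 * p) := by gcongr
    _ = _ := by rw [rpow_add hw]; ring

variable [NormedAddCommGroup E] [InnerProductSpace ℝ E] [FiniteDimensional ℝ E]
  [MeasurableSpace E] [BorelSpace E] {c : ℝ}

lemma integrable_one_add_sq_norm_rpow_mul_exp_neg_sq_div_two (q : ℝ) :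
    Integrable (fun x : E => (1 + ‖x‖ ^ 2) ^ q * exp (-‖x‖ ^ 2 / 2)) := by
  simpa [neg_div, div_eq_inv_mul] using
    integrable_one_add_sq_norm_rpow_mul_exp_neg (E := E) (b := 1 / 2) (by norm_num) q

lemma memLp_farFieldKernel (hc : 0 ≤ c) (s p : ℝ) (v : E) :
    MemLp (farFieldKernel s p c v) 2 (volume.restrict {x | 1 ≤ ‖v - x‖}) := by
  have hmeas : Measurable (farFieldKernel s p c v) := by unfold farFieldKernel; fun_prop
  refine (memLp_two_iff_integrable_sq hmeas.aestronglyMeasurable).2 <|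
    (((integrable_one_add_sq_norm_rpow_mul_exp_neg_sq_div_two (|s| + 2 * p)).const_mul
      (4 ^ |s| * c * (1 + ‖v‖ ^ 2) ^ s)).restrict).mono' (by fun_prop) ?_
  refine (ae_restrict_iff' (measurableSet_le measurable_const (by fun_prop))).2 <|
    Filter.Eventually.of_forall fun x hx => ?_
  rw [norm_of_nonneg (sq_nonneg _)]
  exact farFieldKernel_sq_le hc s p hx

lemma integral_farFieldKernel_sq_le (hc : 0 ≤ c) (s p : ℝ) :
    ∃ B > 0, ∀ v : E,
      ∫ x in {x | 1 ≤ ‖v - x‖}, farFieldKernel s p c v x ^ 2 ≤ B * (1 + ‖v‖ ^ 2) ^ s := by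
  set g := fun x : E => (1 + ‖x‖ ^ 2) ^ (|s| + 2 * p) * exp (-‖x‖ ^ 2 / 2)
  have hg : Integrable g := integrable_one_add_sq_norm_rpow_mul_exp_neg_sq_div_two _
  have hB : 0 ≤ 4 ^ |s| * c * ∫ x, g x :=
    mul_nonneg (by positivity) (integral_nonneg fun x => by positivity)
  refine ⟨(4 ^ |s| * c * ∫ x, g x) + 1, by linarith, fun v => ?_⟩
  have hS : MeasurableSet {x : E | 1 ≤ ‖v - x‖} := measurableSet_le measurable_const (by fun_prop)
  calc ∫ x in {x | 1 ≤ ‖v - x‖}, farFieldKernel s p c v x ^ 2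
      ≤ ∫ x in {x | 1 ≤ ‖v - x‖}, 4 ^ |s| * c * (1 + ‖v‖ ^ 2) ^ s * g x :=
        setIntegral_mono_on (memLp_farFieldKernel hc s p v).integrable_sq
          (hg.const_mul _).integrableOn hS fun x hx => farFieldKernel_sq_le hc s p hx
    _ ≤ ∫ x, 4 ^ |s| * c * (1 + ‖v‖ ^ 2) ^ s * g x :=
        setIntegral_le_integral (hg.const_mul _) (Filter.Eventually.of_forall fun x => by positivity)
    _ = (4 ^ |s| * c * ∫ x, g x) * (1 + ‖v‖ ^ 2) ^ s := by rw [integral_const_mul]; ring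
    _ ≤ ((4 ^ |s| * c * ∫ x, g x) + 1) * (1 + ‖v‖ ^ 2) ^ s :=
        mul_le_mul_of_nonneg_right (by linarith) (by positivity)

end FarFieldKernel

theorem far_field_bound_general (γ : ℝ) :
    ∃ C > 0, ∀ f : EuclideanSpace ℝ (Fin 3) → ℝ,
      MemLp f 2 (volume : Measure (EuclideanSpace ℝ (Fin 3))) →
      MemLp (fun v' => (1 + ‖v'‖ ^ 2) ^ (γ / 4) * f v') 2
        (volume : Measure (EuclideanSpace ℝ (Fin 3))) →
      ∀ v : EuclideanSpace ℝ (Fin 3),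
        (∫ v' in {v' : EuclideanSpace ℝ (Fin 3) | 1 ≤ ‖v - v'‖},
            ‖v - v'‖ ^ γ * Real.sqrt ((2 * π) ^ (3 / 2 : ℝ) * Real.exp (-‖v'‖ ^ 2 / 2)) * |f v'|)
          ≤ C * (1 + ‖v‖ ^ 2) ^ ((γ + 2) / 2) *
            (∫ v' : EuclideanSpace ℝ (Fin 3),
              ((1 + ‖v'‖ ^ 2) ^ (γ / 4) * |f v'|) ^ 2) ^ (1 / 2 : ℝ) := by
  have hc : (0 : ℝ) ≤ (2 * π) ^ (3 / 2 : ℝ) := by positivity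
  obtain ⟨B, hB, hkernel⟩ :=
    integral_farFieldKernel_sq_le (E := EuclideanSpace ℝ (Fin 3)) hc (γ + 2) (-(γ / 4))
  refine ⟨B ^ (1 / 2 : ℝ), by positivity, fun f _ hfw v => ?_⟩
  set H := fun x : EuclideanSpace ℝ (Fin 3) => (1 + ‖x‖ ^ 2) ^ (γ / 4) * |f x|
  have hH : MemLp H 2 volume := by
    convert hfw.norm using 2 with x
    rw [norm_mul, norm_of_nonneg (by positivity), norm_eq_abs]
  have hS : MeasurableSet {x : EuclideanSpace ℝ (Fin 3) | 1 ≤ ‖v - x‖} :=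
    measurableSet_le measurable_const (by fun_prop)
  calc _ ≤ (∫ x in {x | 1 ≤ ‖v - x‖}, farFieldKernel (γ + 2) (-(γ / 4)) _ v x ^ 2) ^ (1 / 2 : ℝ) *
          (∫ x in {x | 1 ≤ ‖v - x‖}, H x ^ 2) ^ (1 / 2 : ℝ) :=
        integral_le_L2_mul_L2_of_le_mul (ae_of_all _ fun x => by positivity)
          (ae_of_all _ fun x => by unfold farFieldKernel; positivity)
          (ae_of_all _ fun x => by positivity)
          ((ae_restrict_iff' hS).2 <| ae_of_all _ fun x hx =>
            rpow_mul_sqrt_mul_abs_le_farFieldKernel_mul hx γ _ (f x))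
          (memLp_farFieldKernel hc _ _ v) (hH.restrict _)
    _ ≤ (B * (1 + ‖v‖ ^ 2) ^ (γ + 2)) ^ (1 / 2 : ℝ) * (∫ x, H x ^ 2) ^ (1 / 2 : ℝ) := by
        gcongr ?_ ^ _ * ?_ ^ _
        · exact hkernel v
        · exact setIntegral_le_integral hH.integrable_sq (ae_of_all _ fun x => sq_nonneg _)
    _ = _ := by rw [mul_rpow hB.le (by positivity), ← rpow_mul (by positivity), mul_one_div]

/-- For `−3 < γ < 0` and `μ(v) = (2π)^{3/2} e^{−|v|²/2}`, the far-field part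
`A₂(v) = ∫_{|v−v'|≥1} |v−v'|^γ μ^{1/2}(v') |f(v')| dv'` is bounded by
`C ⟨v⟩^{γ+2} ‖⟨·⟩^{γ/2} f‖_{L²}`. -/
theorem far_field_bound (γ : ℝ) (hγ1 : -3 < γ) (hγ2 : γ < 0) :
    ∃ C > 0, ∀ f : EuclideanSpace ℝ (Fin 3) → ℝ,
      MemLp f 2 (volume : Measure (EuclideanSpace ℝ (Fin 3))) →
      MemLp (fun v' => (1 + ‖v'‖ ^ 2) ^ (γ / 4) * f v') 2
        (volume : Measure (EuclideanSpace ℝ (Fin 3))) →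
      ∀ v : EuclideanSpace ℝ (Fin 3),
        (∫ v' in {v' : EuclideanSpace ℝ (Fin 3) | 1 ≤ ‖v - v'‖},
            ‖v - v'‖ ^ γ * Real.sqrt ((2 * π) ^ (3 / 2 : ℝ) * Real.exp (-‖v'‖ ^ 2 / 2)) * |f v'|)
          ≤ C * (1 + ‖v‖ ^ 2) ^ ((γ + 2) / 2) *
            (∫ v' : EuclideanSpace ℝ (Fin 3),
              ((1 + ‖v'‖ ^ 2) ^ (γ / 4) * |f v'|) ^ 2) ^ (1 / 2 : ℝ) :=
  far_field_bound_general γ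
end

section
/- Let −3 < γ < 0 and let f be a Schwartz function on ℝ³. Define ‖f‖_* = ‖⟨·⟩^{γ/2} ∇f‖_{L²} + ‖⟨·⟩^{1+γ/2} f‖_{L²}. Then there is a constant C > 0 (depending only on γ) such that ‖⟨·⟩^{γ/2} f‖_{L³(ℝ³)} ≤ C ‖f‖_*. -/
open MeasureTheory Real SchwartzMap

/-!
Write `g = ⟨v⟩^{γ/2} f`. Hölder's inequality interpolates
`‖g‖_{L³} ≤ ‖g‖_{L²}^{1/2} ‖g‖_{L⁶}^{1/2}`, and the Gagliardo–Nirenberg–Sobolev inequality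
bounds `‖g‖_{L⁶}` by `‖∇g‖_{L²} + ‖g‖_{L²}`; Mathlib states it for compactly supported functions,
and cutting off with rescaled bumps and Fatou's lemma removes that restriction at the price of the
`‖g‖_{L²}` term. Finally `⟨v⟩^{γ/2} ≤ ⟨v⟩^{1+γ/2}` and
`|∇⟨v⟩^{γ/2}| ≤ (|γ|/2) ⟨v⟩^{γ/2-1} ≤ (|γ|/2) ⟨v⟩^{1+γ/2}`, so both terms are bounded by `‖f‖_*`.
-/

open scoped ENNReal NNReal

theorem ENNReal.rpow_mul_rpow_one_sub_le_add (a b : ℝ≥0∞) {θ : ℝ} (hθ0 : 0 ≤ θ) (hθ1 : θ ≤ 1) :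
    a ^ θ * b ^ (1 - θ) ≤ a + b :=
  calc a ^ θ * b ^ (1 - θ) ≤ (a + b) ^ θ * (a + b) ^ (1 - θ) := by
        gcongr
        · exact le_self_add
        · exact le_add_self
    _ = a + b := by
        rw [← ENNReal.rpow_add_of_nonneg _ _ hθ0 (by linarith), add_sub_cancel, ENNReal.rpow_one]

namespace MeasureTheory

variable {α F G H : Type*} [MeasurableSpace α] {μ : Measure α}
  [NormedAddCommGroup F] [NormedAddCommGroup G] [NormedAddCommGroup H]

theorem eLpNorm_le_eLpNorm_rpow_mul_eLpNorm_rpow {f : α → F} (hf : AEStronglyMeasurable f μ)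
    {p q r : ℝ≥0∞} {θ : ℝ} (hθ0 : 0 < θ) (hθ1 : θ < 1)
    (hr : r⁻¹ = ENNReal.ofReal θ * p⁻¹ + ENNReal.ofReal (1 - θ) * q⁻¹) :
    eLpNorm f r μ ≤ eLpNorm f p μ ^ θ * eLpNorm f q μ ^ (1 - θ) := by
  have hθ : ENNReal.ofReal θ ≠ 0 := ENNReal.ofReal_ne_zero_iff.mpr hθ0
  have hθ' : ENNReal.ofReal (1 - θ) ≠ 0 := ENNReal.ofReal_ne_zero_iff.mpr (by linarith)
  have : ENNReal.HolderTriple (p / ENNReal.ofReal θ) (q / ENNReal.ofReal (1 - θ)) r := by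
    constructor
    rw [ENNReal.inv_div (Or.inl ENNReal.ofReal_ne_top) (Or.inl hθ),
      ENNReal.inv_div (Or.inl ENNReal.ofReal_ne_top) (Or.inl hθ'), hr, div_eq_mul_inv,
      div_eq_mul_inv]
  have hsplit : (fun x => ‖f x‖ ^ θ * ‖f x‖ ^ (1 - θ)) = fun x => ‖f x‖ := by
    ext x
    rw [← rpow_add' (norm_nonneg _) (by norm_num), add_sub_cancel, rpow_one]
  calc eLpNorm f r μ = eLpNorm (fun x => ‖f x‖ ^ θ * ‖f x‖ ^ (1 - θ)) r μ := by
        rw [hsplit, eLpNorm_norm]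
    _ ≤ 1 * eLpNorm (fun x => ‖f x‖ ^ θ) (p / ENNReal.ofReal θ) μ *
          eLpNorm (fun x => ‖f x‖ ^ (1 - θ)) (q / ENNReal.ofReal (1 - θ)) μ :=
        eLpNorm_le_eLpNorm_mul_eLpNorm'_of_norm
          (hf.norm.aemeasurable.pow_const θ).aestronglyMeasurable
          (hf.norm.aemeasurable.pow_const (1 - θ)).aestronglyMeasurable (· * ·) 1
          (Filter.Eventually.of_forall fun x => by simp)
    _ = eLpNorm f p μ ^ θ * eLpNorm f q μ ^ (1 - θ) := by
        rw [one_mul, eLpNorm_norm_rpow f hθ0, eLpNorm_norm_rpow f (by linarith),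
          ENNReal.div_mul_cancel hθ ENNReal.ofReal_ne_top,
          ENNReal.div_mul_cancel hθ' ENNReal.ofReal_ne_top]

theorem eLpNorm_le_eLpNorm_add_mul_eLpNorm_of_norm_le {f : α → F} {a : α → G} {b : α → H}
    {p : ℝ≥0∞} (hp : 1 ≤ p) (ha : AEStronglyMeasurable a μ) (hb : AEStronglyMeasurable b μ)
    {c : ℝ} (hc : 0 ≤ c) (h : ∀ᵐ x ∂μ, ‖f x‖ ≤ ‖a x‖ + c * ‖b x‖) :
    eLpNorm f p μ ≤ eLpNorm a p μ + ENNReal.ofReal c * eLpNorm b p μ :=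
  calc eLpNorm f p μ ≤ eLpNorm ((fun x => ‖a x‖) + c • fun x => ‖b x‖) p μ :=
        eLpNorm_mono_ae_real h
    _ ≤ eLpNorm (fun x => ‖a x‖) p μ + eLpNorm (c • fun x => ‖b x‖) p μ :=
        eLpNorm_add_le ha.norm (hb.norm.const_smul c) hp
    _ = eLpNorm a p μ + ENNReal.ofReal c * eLpNorm b p μ := by
        rw [eLpNorm_const_smul, eLpNorm_norm, eLpNorm_norm, Real.enorm_of_nonneg hc]

end MeasureTheory

section Sobolev

open Filter Module Topology

variable {E : Type*} [NormedAddCommGroup E] [NormedSpace ℝ E]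

theorem exists_cutoff_seq [FiniteDimensional ℝ E] :
    ∃ (χ : ℕ → E → ℝ) (K : ℝ≥0), (∀ n, ContDiff ℝ 1 (χ n)) ∧ (∀ n, HasCompactSupport (χ n)) ∧
      (∀ n x, |χ n x| ≤ 1) ∧ (∀ n x, ‖fderiv ℝ (χ n) x‖ ≤ K) ∧ ∀ x, ∀ᶠ n in atTop, χ n x = 1 := by
  let φ : ContDiffBump (0 : E) := ⟨1, 2, one_pos, one_lt_two⟩
  obtain ⟨K, hK⟩ : ∃ K, ∀ y, ‖fderiv ℝ φ y‖ ≤ K :=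
    (φ.hasCompactSupport.fderiv ℝ).exists_bound_of_continuous
      (φ.contDiff.continuous_fderiv one_ne_zero)
  have hc : ∀ n : ℕ, 0 < ((n : ℝ) + 1)⁻¹ := fun n => by positivity
  refine ⟨fun n x => φ (((n : ℝ) + 1)⁻¹ • x), K.toNNReal, fun n => ?_, fun n => ?_,
    fun n x => ?_, fun n x => ?_, fun x => ?_⟩
  · exact φ.contDiff.comp (contDiff_const_smul _)
  · simpa [Function.comp_def] using
      φ.hasCompactSupport.comp_homeomorph
        (LinearEquiv.smulOfNeZero ℝ E _ (hc n).ne').toContinuousLinearEquiv.toHomeomorph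
  · rw [abs_of_nonneg φ.nonneg]
    exact φ.le_one
  · rw [fderiv_comp_smul, norm_smul, Real.norm_of_nonneg (hc n).le]
    calc ((n : ℝ) + 1)⁻¹ * ‖fderiv ℝ φ _‖ ≤ 1 * K :=
          mul_le_mul (inv_le_one_of_one_le₀ (by linarith [n.cast_nonneg (α := ℝ)])) (hK _)
            (norm_nonneg _) zero_le_one
      _ ≤ K.toNNReal := by rw [one_mul]; exact Real.le_coe_toNNReal K
  · filter_upwards [eventually_ge_atTop ⌈‖x‖⌉₊] with n hn
    refine φ.one_of_mem_closedBall ?_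
    rw [Metric.mem_closedBall, dist_zero_right, norm_smul, Real.norm_of_nonneg (hc n).le,
      inv_mul_le_iff₀ (by positivity), mul_one]
    calc ‖x‖ ≤ ⌈‖x‖⌉₊ := Nat.le_ceil _
      _ ≤ n := by exact_mod_cast hn
      _ ≤ n + 1 := by linarith

theorem norm_fderiv_smul_le {F : Type*} [NormedAddCommGroup F] [NormedSpace ℝ F] {χ : E → ℝ}
    {u : E → F} {x : E} (hχ : DifferentiableAt ℝ χ x) (hu : DifferentiableAt ℝ u x)
    (hχ1 : |χ x| ≤ 1) {K : ℝ} (hK : ‖fderiv ℝ χ x‖ ≤ K) :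
    ‖fderiv ℝ (fun y => χ y • u y) x‖ ≤ ‖fderiv ℝ u x‖ + K * ‖u x‖ := by
  rw [fderiv_fun_smul hχ hu]
  refine (norm_add_le _ _).trans (add_le_add ?_ ?_)
  · rw [norm_smul, Real.norm_eq_abs]
    exact mul_le_of_le_one_left (norm_nonneg _) hχ1
  · rw [ContinuousLinearMap.norm_smulRight_apply]
    gcongr

variable [MeasurableSpace E] [BorelSpace E] [FiniteDimensional ℝ E] (μ : Measure E)
  [μ.IsAddHaarMeasure]

theorem exists_eLpNorm_le_mul_eLpNorm_fderiv_add_eLpNorm (F : Type*) [NormedAddCommGroup F]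
    [InnerProductSpace ℝ F] {p p' : ℝ≥0}
    (hp : 1 ≤ p) (hn : 0 < finrank ℝ E) (hp' : (p' : ℝ)⁻¹ = p⁻¹ - (finrank ℝ E : ℝ)⁻¹) :
    ∃ C : ℝ≥0, ∀ u : E → F, ContDiff ℝ 1 u →
      eLpNorm u p' μ ≤ C * (eLpNorm (fderiv ℝ u) p μ + eLpNorm u p μ) := by
  obtain ⟨χ, K, hχ, hχc, hχ1, hK, hχev⟩ := exists_cutoff_seq (E := E)
  set C₀ := eLpNormLESNormFDerivOfEqInnerConst μ p
  refine ⟨C₀ * (1 + K), fun u hu => ?_⟩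
  have hcut : ∀ n, eLpNorm (fun x => χ n x • u x) p' μ ≤
      C₀ * (eLpNorm (fderiv ℝ u) p μ + K * eLpNorm u p μ) := fun n => by
    have hdu := hu.differentiable one_ne_zero
    calc eLpNorm (fun x => χ n x • u x) p' μ
        ≤ C₀ * eLpNorm (fderiv ℝ fun x => χ n x • u x) p μ :=
          eLpNorm_le_eLpNorm_fderiv_of_eq_inner μ ((hχ n).smul hu) (hχc n).smul_right hp hn hp'
      _ ≤ C₀ * (eLpNorm (fderiv ℝ u) p μ + K * eLpNorm u p μ) := by
          gcongr
          rw [← ENNReal.ofReal_coe_nnreal (p := K)]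
          exact eLpNorm_le_eLpNorm_add_mul_eLpNorm_of_norm_le (ENNReal.one_le_coe_iff.mpr hp)
            (hu.continuous_fderiv one_ne_zero).aestronglyMeasurable
            hu.continuous.aestronglyMeasurable K.coe_nonneg
            (ae_of_all _ fun x => norm_fderiv_smul_le
              ((hχ n).differentiable one_ne_zero x) (hdu x) (hχ1 n x) (hK n x))
  have hlim : ∀ᵐ x ∂μ, Tendsto (fun n => χ n x • u x) atTop (𝓝 (u x)) :=
    ae_of_all _ fun x => tendsto_const_nhds.congr' <| (hχev x).mono fun n hn => by
      simp only [hn, one_smul]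
  calc eLpNorm u p' μ ≤ atTop.liminf fun n => eLpNorm (fun x => χ n x • u x) p' μ :=
        Lp.eLpNorm_lim_le_liminf_eLpNorm
          (fun n => ((hχ n).continuous.smul hu.continuous).aestronglyMeasurable) u hlim
    _ ≤ C₀ * (eLpNorm (fderiv ℝ u) p μ + K * eLpNorm u p μ) :=
        liminf_le_of_frequently_le' (Frequently.of_forall hcut)
    _ ≤ C₀ * (1 + K) * (eLpNorm (fderiv ℝ u) p μ + eLpNorm u p μ) := by
        rw [mul_assoc]
        gcongr
        calc eLpNorm (fderiv ℝ u) p μ + K * eLpNorm u p μ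
            ≤ eLpNorm (fderiv ℝ u) p μ + eLpNorm u p μ
              + K * (eLpNorm (fderiv ℝ u) p μ + eLpNorm u p μ) := by
              gcongr
              · exact le_self_add
              · exact le_add_self
          _ = _ := by ring

theorem exists_eLpNorm_three_le_of_finrank_eq_three (F : Type*) [NormedAddCommGroup F]
    [InnerProductSpace ℝ F] (hE : finrank ℝ E = 3) :
    ∃ C > 0, ∀ u : E → F, ContDiff ℝ 1 u →
      eLpNorm u 3 μ ≤ ENNReal.ofReal C * (eLpNorm (fderiv ℝ u) 2 μ + eLpNorm u 2 μ) := by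
  obtain ⟨C, hC⟩ := exists_eLpNorm_le_mul_eLpNorm_fderiv_add_eLpNorm μ F (p := 2) (p' := 6)
    one_le_two (by rw [hE]; norm_num) (by rw [hE]; norm_num)
  refine ⟨1 + C, by positivity, fun u hu => ?_⟩
  have h6 : eLpNorm u 6 μ ≤ C * (eLpNorm (fderiv ℝ u) 2 μ + eLpNorm u 2 μ) := by
    simpa using hC u hu
  have h236 : (3 : ℝ≥0∞)⁻¹ = ENNReal.ofReal (1 / 2) * 2⁻¹ + ENNReal.ofReal (1 - 1 / 2) * 6⁻¹ := by
    rw [← ENNReal.toReal_eq_toReal_iff' (by simp) (by simp [ENNReal.mul_eq_top]),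
      ENNReal.toReal_add (by simp [ENNReal.mul_eq_top]) (by simp [ENNReal.mul_eq_top])]
    norm_num
  calc eLpNorm u 3 μ ≤ eLpNorm u 2 μ ^ (1 / 2 : ℝ) * eLpNorm u 6 μ ^ (1 - 1 / 2 : ℝ) :=
        eLpNorm_le_eLpNorm_rpow_mul_eLpNorm_rpow hu.continuous.aestronglyMeasurable
          (by norm_num) (by norm_num) h236
    _ ≤ eLpNorm u 2 μ + eLpNorm u 6 μ :=
        ENNReal.rpow_mul_rpow_one_sub_le_add _ _ (by norm_num) (by norm_num)
    _ ≤ (eLpNorm (fderiv ℝ u) 2 μ + eLpNorm u 2 μ)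
          + C * (eLpNorm (fderiv ℝ u) 2 μ + eLpNorm u 2 μ) := add_le_add le_add_self h6
    _ = ENNReal.ofReal (1 + C) * (eLpNorm (fderiv ℝ u) 2 μ + eLpNorm u 2 μ) := by
        rw [ENNReal.ofReal_add zero_le_one C.coe_nonneg, ENNReal.ofReal_one,
          ENNReal.ofReal_coe_nnreal]
        ring

end Sobolev

section JapaneseBracket

variable {E : Type*} [NormedAddCommGroup E]

theorem one_add_norm_sq_rpow_le_rpow {s t : ℝ} (hst : s ≤ t) (v : E) :
    (1 + ‖v‖ ^ 2) ^ s ≤ (1 + ‖v‖ ^ 2) ^ t :=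
  rpow_le_rpow_of_exponent_le (le_add_of_nonneg_right (by positivity)) hst

theorem eLpNorm_one_add_norm_sq_rpow_mul_le [MeasurableSpace E] {μ : Measure E} {s t : ℝ}
    (hst : s ≤ t) (f : E → ℝ) (p : ℝ≥0∞) :
    eLpNorm (fun v => (1 + ‖v‖ ^ 2) ^ s * f v) p μ ≤
      eLpNorm (fun v => (1 + ‖v‖ ^ 2) ^ t * f v) p μ :=
  eLpNorm_mono fun v => by
    rw [norm_mul, norm_mul, Real.norm_of_nonneg (rpow_nonneg (by positivity) _),
      Real.norm_of_nonneg (rpow_nonneg (by positivity) _)]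
    gcongr ?_ * _
    exact one_add_norm_sq_rpow_le_rpow hst v

variable [InnerProductSpace ℝ E]

theorem contDiff_one_add_norm_sq_rpow (s : ℝ) {n : WithTop ℕ∞} :
    ContDiff ℝ n fun v : E => (1 + ‖v‖ ^ 2) ^ s :=
  (contDiff_const.add (contDiff_norm_sq ℝ)).rpow_const_of_ne fun v => by positivity

theorem hasFDerivAt_one_add_norm_sq_rpow (s : ℝ) (v : E) :
    HasFDerivAt (fun v : E => (1 + ‖v‖ ^ 2) ^ s)
      ((s * (1 + ‖v‖ ^ 2) ^ (s - 1)) • (2 • innerSL ℝ v)) v :=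
  ((hasStrictFDerivAt_norm_sq v).hasFDerivAt.const_add 1).rpow_const (Or.inl (by positivity))

theorem norm_fderiv_one_add_norm_sq_rpow_le (s : ℝ) (v : E) :
    ‖fderiv ℝ (fun v : E => (1 + ‖v‖ ^ 2) ^ s) v‖ ≤ 2 * |s| * (1 + ‖v‖ ^ 2) ^ (s - 1 / 2) := by
  have hq : 0 < 1 + ‖v‖ ^ 2 := by positivity
  have hv : ‖v‖ ≤ (1 + ‖v‖ ^ 2) ^ (1 / 2 : ℝ) := by
    rw [← sqrt_eq_rpow]
    exact (le_sqrt (norm_nonneg v) hq.le).mpr (by linarith)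
  rw [(hasFDerivAt_one_add_norm_sq_rpow s v).fderiv, norm_smul, ← Nat.cast_smul_eq_nsmul ℝ,
    norm_smul, innerSL_apply_norm, Nat.cast_ofNat, Real.norm_ofNat, Real.norm_eq_abs, abs_mul,
    abs_of_pos (rpow_pos_of_pos hq _)]
  calc |s| * (1 + ‖v‖ ^ 2) ^ (s - 1) * (2 * ‖v‖)
      ≤ |s| * (1 + ‖v‖ ^ 2) ^ (s - 1) * (2 * (1 + ‖v‖ ^ 2) ^ (1 / 2 : ℝ)) := by gcongr
    _ = 2 * |s| * (1 + ‖v‖ ^ 2) ^ (s - 1 / 2) := by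
        rw [show s - 1 / 2 = (s - 1) + 1 / 2 by ring, rpow_add hq]
        ring

theorem norm_fderiv_one_add_norm_sq_rpow_mul_le [CompleteSpace E] (s : ℝ) {f : E → ℝ} {v : E}
    (hf : DifferentiableAt ℝ f v) :
    ‖fderiv ℝ (fun v => (1 + ‖v‖ ^ 2) ^ s * f v) v‖ ≤
      ‖(1 + ‖v‖ ^ 2) ^ s • gradient f v‖ + 2 * |s| * ‖(1 + ‖v‖ ^ 2) ^ (s + 1 / 2) * f v‖ := by
  rw [fderiv_fun_mul (hasFDerivAt_one_add_norm_sq_rpow s v).differentiableAt hf]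
  refine (norm_add_le _ _).trans (add_le_add ?_ ?_)
  · rw [norm_smul, norm_smul, gradient, LinearIsometryEquiv.norm_map]
  · calc ‖f v • fderiv ℝ (fun v : E => (1 + ‖v‖ ^ 2) ^ s) v‖
        ≤ ‖f v‖ * (2 * |s| * (1 + ‖v‖ ^ 2) ^ (s - 1 / 2)) := by
          rw [norm_smul]
          gcongr
          exact norm_fderiv_one_add_norm_sq_rpow_le s v
      _ ≤ ‖f v‖ * (2 * |s| * (1 + ‖v‖ ^ 2) ^ (s + 1 / 2)) := by
          gcongr ‖f v‖ * (2 * |s| * ?_)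
          exact one_add_norm_sq_rpow_le_rpow (by linarith) v
      _ = 2 * |s| * ‖(1 + ‖v‖ ^ 2) ^ (s + 1 / 2) * f v‖ := by
          rw [norm_mul, Real.norm_of_nonneg (rpow_nonneg (by positivity) _)]
          ring

theorem eLpNorm_fderiv_one_add_norm_sq_rpow_mul_le [FiniteDimensional ℝ E] [MeasurableSpace E]
    [BorelSpace E] {μ : Measure E} (s : ℝ) {f : E → ℝ} (hf : ContDiff ℝ 1 f) {p : ℝ≥0∞}
    (hp : 1 ≤ p) :
    eLpNorm (fderiv ℝ fun v => (1 + ‖v‖ ^ 2) ^ s * f v) p μ ≤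
      eLpNorm (fun v => (1 + ‖v‖ ^ 2) ^ s • gradient f v) p μ +
        ENNReal.ofReal (2 * |s|) * eLpNorm (fun v => (1 + ‖v‖ ^ 2) ^ (s + 1 / 2) * f v) p μ :=
  eLpNorm_le_eLpNorm_add_mul_eLpNorm_of_norm_le hp
    ((contDiff_one_add_norm_sq_rpow (n := 0) s).continuous.smul
      ((InnerProductSpace.toDual ℝ E).symm.continuous.comp
        (hf.continuous_fderiv one_ne_zero))).aestronglyMeasurable
    ((contDiff_one_add_norm_sq_rpow (n := 0) _).continuous.mul hf.continuous).aestronglyMeasurable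
    (by positivity)
    (ae_of_all _ fun v =>
      norm_fderiv_one_add_norm_sq_rpow_mul_le s (hf.differentiable one_ne_zero v))

end JapaneseBracket

theorem weighted_L3_by_energy_norm_general (γ : ℝ) :
    ∃ C > 0, ∀ f : SchwartzMap (EuclideanSpace ℝ (Fin 3)) ℝ,
      eLpNorm (fun v => (1 + ‖v‖ ^ 2) ^ (γ / 4) * f v) 3
          (volume : Measure (EuclideanSpace ℝ (Fin 3)))
        ≤ ENNReal.ofReal C *
            (eLpNorm (fun v => (1 + ‖v‖ ^ 2) ^ (γ / 4) • gradient (⇑f) v) 2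
                (volume : Measure (EuclideanSpace ℝ (Fin 3)))
              + eLpNorm (fun v => (1 + ‖v‖ ^ 2) ^ ((1 + γ / 2) / 2) * f v) 2
                (volume : Measure (EuclideanSpace ℝ (Fin 3)))) := by
  obtain ⟨C, hC, hGN⟩ := exists_eLpNorm_three_le_of_finrank_eq_three
    (volume : Measure (EuclideanSpace ℝ (Fin 3))) ℝ finrank_euclideanSpace_fin
  refine ⟨C * (1 + 2 * |γ / 4|), by positivity, fun f => ?_⟩
  rw [show (1 + γ / 2) / 2 = γ / 4 + 1 / 2 by ring]
  have hf : ContDiff ℝ 1 f := f.smooth 1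
  set A := eLpNorm (fun v => (1 + ‖v‖ ^ 2) ^ (γ / 4) • gradient (⇑f) v) 2 volume
  set B := eLpNorm (fun v => (1 + ‖v‖ ^ 2) ^ (γ / 4 + 1 / 2) * f v) 2 volume
  calc _ ≤ ENNReal.ofReal C *
          (eLpNorm (fderiv ℝ fun v => (1 + ‖v‖ ^ 2) ^ (γ / 4) * f v) 2 volume +
            eLpNorm (fun v => (1 + ‖v‖ ^ 2) ^ (γ / 4) * f v) 2 volume) :=
        hGN _ ((contDiff_one_add_norm_sq_rpow _).mul hf)
    _ ≤ ENNReal.ofReal C * (A + ENNReal.ofReal (2 * |γ / 4|) * B + B) := by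
        gcongr
        · exact eLpNorm_fderiv_one_add_norm_sq_rpow_mul_le _ hf one_le_two
        · exact eLpNorm_one_add_norm_sq_rpow_mul_le (by linarith) _ _
    _ ≤ ENNReal.ofReal C * (A + ENNReal.ofReal (2 * |γ / 4|) * B + B +
          ENNReal.ofReal (2 * |γ / 4|) * A) := by
        gcongr ENNReal.ofReal C * ?_
        exact le_self_add
    _ = ENNReal.ofReal (C * (1 + 2 * |γ / 4|)) * (A + B) := by
        rw [ENNReal.ofReal_mul hC.le, ENNReal.ofReal_add zero_le_one (by positivity),
          ENNReal.ofReal_one]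
        ring

/-- For `−3 < γ < 0` there is `C > 0` such that
`‖⟨·⟩^{γ/2} f‖_{L³} ≤ C (‖⟨·⟩^{γ/2}∇f‖_{L²} + ‖⟨·⟩^{1+γ/2} f‖_{L²})` for all Schwartz `f`. -/
theorem weighted_L3_by_energy_norm (γ : ℝ) (hγ1 : -3 < γ) (hγ2 : γ < 0) :
    ∃ C > 0, ∀ f : SchwartzMap (EuclideanSpace ℝ (Fin 3)) ℝ,
      eLpNorm (fun v => (1 + ‖v‖ ^ 2) ^ (γ / 4) * f v) 3
          (volume : Measure (EuclideanSpace ℝ (Fin 3)))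
        ≤ ENNReal.ofReal C *
            (eLpNorm (fun v => (1 + ‖v‖ ^ 2) ^ (γ / 4) • gradient (⇑f) v) 2
                (volume : Measure (EuclideanSpace ℝ (Fin 3)))
              + eLpNorm (fun v => (1 + ‖v‖ ^ 2) ^ ((1 + γ / 2) / 2) * f v) 2
                (volume : Measure (EuclideanSpace ℝ (Fin 3)))) :=
  weighted_L3_by_energy_norm_general γ
end
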